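/- arXiv:2210.00260 — 2 statements merged into one kernel-verified Lean document; each statement's English description precedes it below -/
import Mathlib

section
/- Bijectivity of the Kirchhoff transform: φ restricted to (−∞, h_d] is a strictly increasing bijection onto the interval (0, (h̄/(1−λβ))·(h_d/h̄)^{1−λβ}], and φ restricted to (−∞, 0) is a strictly increasing bijection onto the interval (0, (h̄/(1−λβ))·(h_d/h̄)^{1−λβ} − h_d·(h_d/h̄)^{−λβ}). -/
open Real Set Filter Topology

/-- The Kirchhoff transform associated with the Brooks–Corey model:
`φ(h) = (h̄/(1−λβ))·(h/h̄)^{1−λβ}` for `h ≤ h_d`, and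
`φ(h) = (h̄/(1−λβ))·(h_d/h̄)^{1−λβ} + (h_d/h̄)^{−λβ}·(h − h_d)` for `h > h_d`. -/
noncomputable def kirchhoff (lam beta hbar hd : ℝ) (h : ℝ) : ℝ :=
  if h ≤ hd then (hbar / (1 - lam * beta)) * (h / hbar) ^ (1 - lam * beta)
  else (hbar / (1 - lam * beta)) * (hd / hbar) ^ (1 - lam * beta)
        + (hd / hbar) ^ (-(lam * beta)) * (h - hd)

/-! On `(−∞, h_d]` the transform is `h ↦ c · (h / h̄) ^ a` with `a = 1 − λβ < 0` and
`c = h̄ / a > 0`: a composite of the order-reversing bijections `h ↦ h / h̄` and `x ↦ x ^ a`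
with a positive scaling, hence an increasing bijection onto `(0, φ(h_d)]`. On `[h_d, 0)` it is
affine with positive slope and agrees with the first piece at `h_d`, so the two pieces glue to
an increasing bijection of `(−∞, 0)` onto `(0, φ(h_d) − h_d · (h_d / h̄) ^ (−λβ))`. -/

theorem Real.bijOn_rpow_Ici_of_neg {a p : ℝ} (ha : a < 0) (hp : 0 < p) :
    BijOn (fun x : ℝ => x ^ a) (Ici p) (Ioc 0 (p ^ a)) := by
  refine InvOn.bijOn (f' := fun y => y ^ a⁻¹) ⟨fun x hx => ?_, fun y hy => ?_⟩
    (fun x hx => ⟨rpow_pos_of_pos (hp.trans_le hx) a, rpow_le_rpow_of_nonpos hp hx ha.le⟩)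
    (fun y hy => ?_)
  · exact rpow_rpow_inv (hp.le.trans hx) ha.ne
  · exact rpow_inv_rpow hy.1.le ha.ne
  · calc p = (p ^ a) ^ a⁻¹ := (rpow_rpow_inv hp.le ha.ne).symm
      _ ≤ y ^ a⁻¹ := rpow_le_rpow_of_nonpos hy.1 hy.2 (inv_neg''.2 ha).le

theorem bijOn_div_const_Iic_of_neg {b : ℝ} (hb : b < 0) (d : ℝ) :
    BijOn (fun x : ℝ => x / b) (Iic d) (Ici (d / b)) := by
  refine InvOn.bijOn (f' := fun y => y * b) ⟨fun x _ => ?_, fun y _ => ?_⟩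
    (fun x hx => div_le_div_of_nonpos_of_le hb.le hx) (fun y hy => ?_)
  · exact div_mul_cancel₀ x hb.ne
  · exact mul_div_cancel_right₀ y hb.ne
  · exact (div_le_iff_of_neg hb).1 hy

theorem bijOn_const_mul_Ioc_zero {c : ℝ} (hc : 0 < c) (q : ℝ) :
    BijOn (fun x : ℝ => c * x) (Ioc 0 q) (Ioc 0 (c * q)) := by
  have := (mul_right_injective₀ hc.ne').injOn.bijOn_image (s := Ioc 0 q)
  rwa [image_mul_left_Ioc hc, mul_zero] at this

theorem bijOn_affine_Ioo {s : ℝ} (hs : 0 < s) (m d e : ℝ) :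
    BijOn (fun x : ℝ => m + s * (x - d)) (Ioo d e) (Ioo m (m + s * (e - d))) := by
  refine InvOn.bijOn (f' := fun y => d + (y - m) / s) ⟨fun x _ => ?_, fun y _ => ?_⟩
    (fun x hx => ?_) (fun y hy => ?_)
  · field_simp; ring
  · field_simp; ring
  · exact ⟨by nlinarith [hx.1], by nlinarith [hx.2]⟩
  · have hpos : 0 < (y - m) / s := div_pos (by linarith [hy.1]) hs
    have hlt : (y - m) / s < e - d := (div_lt_iff₀' hs).2 (by linarith [hy.2])
    exact ⟨by linarith, by linarith⟩

theorem strictMonoOn_const_mul_div_rpow_of_neg {a b c : ℝ} (ha : a < 0) (hb : b < 0)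
    (hc : 0 < c) :
    StrictMonoOn (fun x : ℝ => c * (x / b) ^ a) (Iio 0) := fun _ _ _ hy hxy =>
  mul_lt_mul_of_pos_left
    (rpow_lt_rpow_of_neg (div_pos_of_neg_of_neg hy hb) (div_lt_div_of_neg_of_lt hb hxy) ha) hc

section Kirchhoff

variable {lam beta hbar hd : ℝ}

theorem kirchhoff_eqOn_Iic :
    EqOn (kirchhoff lam beta hbar hd)
      (fun h => hbar / (1 - lam * beta) * (h / hbar) ^ (1 - lam * beta)) (Iic hd) :=
  fun _ hh => if_pos hh

theorem kirchhoff_eqOn_Ici :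
    EqOn (kirchhoff lam beta hbar hd)
      (fun h => hbar / (1 - lam * beta) * (hd / hbar) ^ (1 - lam * beta)
        + (hd / hbar) ^ (-(lam * beta)) * (h - hd)) (Ici hd) := by
  intro h hh
  rcases (mem_Ici.1 hh).eq_or_lt with rfl | hlt
  · simp [kirchhoff]
  · simp [kirchhoff, hlt.not_ge]

theorem kirchhoff_bijOn_Iic (hlb : 1 < lam * beta) (hhbar : hbar < 0) (hhd : hd < 0) :
    BijOn (kirchhoff lam beta hbar hd) (Iic hd)
      (Ioc 0 ((hbar / (1 - lam * beta)) * (hd / hbar) ^ (1 - lam * beta))) := by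
  have ha : 1 - lam * beta < 0 := by linarith
  exact ((bijOn_const_mul_Ioc_zero (div_pos_of_neg_of_neg hhbar ha) _).comp
    ((Real.bijOn_rpow_Ici_of_neg ha (div_pos_of_neg_of_neg hhd hhbar)).comp
      (bijOn_div_const_Iic_of_neg hhbar hd))).congr kirchhoff_eqOn_Iic.symm

theorem kirchhoff_strictMonoOn_Iio (hlb : 1 < lam * beta) (hhbar : hbar < 0) (hhd : hd < 0) :
    StrictMonoOn (kirchhoff lam beta hbar hd) (Iio 0) := by
  have ha : 1 - lam * beta < 0 := by linarith
  have hs : 0 < (hd / hbar) ^ (-(lam * beta)) :=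
    rpow_pos_of_pos (div_pos_of_neg_of_neg hhd hhbar) _
  rw [← Iic_union_Ico_eq_Iio hhd]
  refine StrictMonoOn.union ?_ ?_ isGreatest_Iic (isLeast_Ico hhd)
  · exact ((strictMonoOn_const_mul_div_rpow_of_neg ha hhbar (div_pos_of_neg_of_neg hhbar ha)).mono
      (Iic_subset_Iio.2 hhd)).congr kirchhoff_eqOn_Iic.symm
  · refine StrictMonoOn.congr (fun _ _ _ _ hxy => ?_)
      (kirchhoff_eqOn_Ici.mono Ico_subset_Ici_self).symm
    gcongr

theorem kirchhoff_bijOn_Iio (hlb : 1 < lam * beta) (hhbar : hbar < 0) (hhd : hd < 0) :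
    BijOn (kirchhoff lam beta hbar hd) (Iio 0)
      (Ioo 0 ((hbar / (1 - lam * beta)) * (hd / hbar) ^ (1 - lam * beta)
        - hd * (hd / hbar) ^ (-(lam * beta)))) := by
  have ha : 1 - lam * beta < 0 := by linarith
  have hs : 0 < (hd / hbar) ^ (-(lam * beta)) :=
    rpow_pos_of_pos (div_pos_of_neg_of_neg hhd hhbar) _
  have hM : 0 < (hbar / (1 - lam * beta)) * (hd / hbar) ^ (1 - lam * beta) :=
    mul_pos (div_pos_of_neg_of_neg hhbar ha) (rpow_pos_of_pos (div_pos_of_neg_of_neg hhd hhbar) _)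
  have hunion := (kirchhoff_bijOn_Iic hlb hhbar hhd).union
    ((bijOn_affine_Ioo hs _ hd 0).congr
      (kirchhoff_eqOn_Ici.mono (Ioo_subset_Ico_self.trans Ico_subset_Ici_self)).symm)
    (by rw [Iic_union_Ioo_eq_Iio hhd]; exact (kirchhoff_strictMonoOn_Iio hlb hhbar hhd).injOn)
  rw [Iic_union_Ioo_eq_Iio hhd, Ioc_union_Ioo_eq_Ioo hM.le (by nlinarith)] at hunion
  rwa [zero_sub, mul_neg, ← sub_eq_add_neg, mul_comm _ hd] at hunion

end Kirchhoff

theorem kirchhoff_bijOn_general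
    (lam beta hbar hd : ℝ)
    (hlb : 1 < lam * beta)
    (hhbar : hbar < 0) (hhd : hd < 0) :
    StrictMonoOn (kirchhoff lam beta hbar hd) (Set.Iic hd) ∧
    Set.BijOn (kirchhoff lam beta hbar hd) (Set.Iic hd)
      (Set.Ioc 0 ((hbar / (1 - lam * beta)) * (hd / hbar) ^ (1 - lam * beta))) ∧
    StrictMonoOn (kirchhoff lam beta hbar hd) (Set.Iio (0 : ℝ)) ∧
    Set.BijOn (kirchhoff lam beta hbar hd) (Set.Iio (0 : ℝ))
      (Set.Ioo 0 ((hbar / (1 - lam * beta)) * (hd / hbar) ^ (1 - lam * beta)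
        - hd * (hd / hbar) ^ (-(lam * beta)))) := by
  have hmono := kirchhoff_strictMonoOn_Iio hlb hhbar hhd
  exact ⟨hmono.mono (Iic_subset_Iio.2 hhd), kirchhoff_bijOn_Iic hlb hhbar hhd, hmono,
    kirchhoff_bijOn_Iio hlb hhbar hhd⟩

/-- Bijectivity of the Kirchhoff transform: `φ` is a strictly increasing bijection
from `(−∞, h_d]` onto `(0, (h̄/(1−λβ))·(h_d/h̄)^{1−λβ}]`, and a strictly increasing
bijection from `(−∞, 0)` onto
`(0, (h̄/(1−λβ))·(h_d/h̄)^{1−λβ} − h_d·(h_d/h̄)^{−λβ})`. -/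
theorem kirchhoff_bijOn
    (lam beta hbar hd : ℝ)
    (hlam : 0 < lam) (hbeta : 1 < beta) (hlb : 1 < lam * beta)
    (hhbar : hbar < 0) (hhd : hd < 0) :
    StrictMonoOn (kirchhoff lam beta hbar hd) (Set.Iic hd) ∧
    Set.BijOn (kirchhoff lam beta hbar hd) (Set.Iic hd)
      (Set.Ioc 0 ((hbar / (1 - lam * beta)) * (hd / hbar) ^ (1 - lam * beta))) ∧
    StrictMonoOn (kirchhoff lam beta hbar hd) (Set.Iio (0 : ℝ)) ∧
    Set.BijOn (kirchhoff lam beta hbar hd) (Set.Iio (0 : ℝ))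
      (Set.Ioo 0 ((hbar / (1 - lam * beta)) * (hd / hbar) ^ (1 - lam * beta)
        - hd * (hd / hbar) ^ (-(lam * beta)))) :=
  kirchhoff_bijOn_general lam beta hbar hd hlb hhbar hhd
end

section
/- Equivalence of the Richards equation and its Kirchhoff-transformed form in one space dimension in the unsaturated regime: let ϕ_p be a real number (porosity factor), K : ℝ → ℝ a function (saturated conductivity profile), and set ω = h̄/h_d and χ(z) = K(z)·ω^{−λβ}. Let u : ℝ × ℝ → ℝ (pressure head as a function of (z, t)) and fix a point (z₀, t₀). Assume: u(z, t₀) ≤ h_d for all z; t ↦ u(z₀, t) is differentiable at t₀; z ↦ u(z, t₀) is differentiable on ℝ; and the two functions z ↦ K(z)·ω^{−λβ}·(u(z,t₀)/h̄)^{−λβ}·∂_z u(z, t₀) and z ↦ K(z)·ω^{−λβ}·(u(z,t₀)/h̄)^{−λβ} are differentiable at z₀. Define v(z, t) = φ(u(z, t)), E = ϕ_p·(−λ/h̄)·ω^{−λ}·(u(z₀,t₀)/h̄)^{λβ−λ−1}, and F(z) = ((1−λβ)/h̄)·(u(z, t₀)/h̄)^{−1}. Then the equation ϕ_p·ω^{−λ}·∂_t[(u/h̄)^{−λ}](z₀,t₀)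 − ∂_z[K·ω^{−λβ}·(u/h̄)^{−λβ}·∂_z u](z₀,t₀) − ∂_z[K·ω^{−λβ}·(u/h̄)^{−λβ}](z₀,t₀) = 0 holds if and only if the Kirchhoff-transformed equation E·∂_t v(z₀,t₀) − ∂_z[χ·∂_z v](z₀,t₀) − ∂_z[χ·F·v](z₀,t₀) = 0 holds; indeed the three corresponding terms are equal: E·∂_t v(z₀,t₀) = ϕ_p·ω^{−λ}·∂_t[(u/h̄)^{−λ}](z₀,t₀), χ(z)·∂_z v(z, t₀) = K(z)·ω^{−λβ}·(u(z,t₀)/h̄)^{−λβ}·∂_z u(z, t₀) for all z, and χ(z)·F(z)·v(z, t₀) = K(z)·ω^{−λβ}·(u(z,t₀)/h̄)^{−λβ} for all z. -/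
/-!
On `h ≤ h_d` the Kirchhoff transform is `φ(h) = h̄/(1−λβ)·(h/h̄)^{1−λβ}`, so `φ'(h) = (h/h̄)^{−λβ}`
(also at `h = h_d`, where the affine branch has the same slope). The chain rule then turns
`∂_z φ(u)` into `(u/h̄)^{−λβ}·∂_z u` and `∂_t φ(u)` into `(u/h̄)^{−λβ}·∂_t u`, while
`(1−λβ)/h̄·(u/h̄)^{−1}·φ(u) = (u/h̄)^{−λβ}` is pure algebra. The three terms of the two equations
therefore agree as functions, and so do their derivatives.
-/

open Real Set Filter Topology

theorem hasDerivAt_div_mul_div_rpow_one_sub {c p x : ℝ} (hp : p ≠ 1) (hx : 0 < x / c) :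
    HasDerivAt (fun h => c / (1 - p) * (h / c) ^ (1 - p)) ((x / c) ^ (-p)) x := by
  have hc : c ≠ 0 := by rintro rfl; simp at hx
  have h := (((hasDerivAt_id' x).div_const c).rpow_const (p := 1 - p)
    (Or.inl hx.ne')).const_mul (c / (1 - p))
  rw [show 1 - p - 1 = -p by ring] at h
  refine h.congr_deriv ?_
  field_simp

section Kirchhoff

variable {lam beta hbar hd h : ℝ}

theorem kirchhoff_of_le (hh : h ≤ hd) :
    kirchhoff lam beta hbar hd h =
      hbar / (1 - lam * beta) * (h / hbar) ^ (1 - lam * beta) :=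
  if_pos hh

theorem hasDerivAt_kirchhoff (hlb : lam * beta ≠ 1) (hh : h ≤ hd) (hpos : 0 < h / hbar) :
    HasDerivAt (kirchhoff lam beta hbar hd) ((h / hbar) ^ (-(lam * beta))) h := by
  have hpower := hasDerivAt_div_mul_div_rpow_one_sub hlb hpos
  rcases hh.lt_or_eq with hlt | rfl
  · refine hpower.congr_of_eventuallyEq ?_
    filter_upwards [Iio_mem_nhds hlt] with x hx
    exact kirchhoff_of_le hx.le
  · have hleft : HasDerivWithinAt (kirchhoff lam beta hbar h)
        ((h / hbar) ^ (-(lam * beta))) (Iic h) h :=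
      hpower.hasDerivWithinAt.congr (fun x hx => kirchhoff_of_le hx) (kirchhoff_of_le le_rfl)
    have haffine : HasDerivAt (fun x => hbar / (1 - lam * beta) * (h / hbar) ^ (1 - lam * beta)
        + (h / hbar) ^ (-(lam * beta)) * (x - h)) ((h / hbar) ^ (-(lam * beta))) h := by
      simpa using
        (((hasDerivAt_id h).sub_const h).const_mul ((h / hbar) ^ (-(lam * beta)))).const_add
          (hbar / (1 - lam * beta) * (h / hbar) ^ (1 - lam * beta))
    have hright : HasDerivWithinAt (kirchhoff lam beta hbar h)
        ((h / hbar) ^ (-(lam * beta))) (Ici h) h := by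
      refine haffine.hasDerivWithinAt.congr (fun x hx => ?_) (by simp [kirchhoff])
      rcases (mem_Ici.mp hx).lt_or_eq with hlt | rfl
      · exact if_neg hlt.not_ge
      · simp [kirchhoff]
    simpa [Iic_union_Ici] using hleft.union hright

theorem HasDerivAt.kirchhoff {f : ℝ → ℝ} {f' x : ℝ} (hf : HasDerivAt f f' x)
    (hlb : lam * beta ≠ 1) (hfx : f x ≤ hd) (hpos : 0 < f x / hbar) :
    HasDerivAt (fun y => kirchhoff lam beta hbar hd (f y))
      ((f x / hbar) ^ (-(lam * beta)) * f') x :=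
  (hasDerivAt_kirchhoff hlb hfx hpos).comp x hf

theorem deriv_kirchhoff_comp {f : ℝ → ℝ} {x : ℝ} (hf : DifferentiableAt ℝ f x)
    (hlb : lam * beta ≠ 1) (hfx : f x ≤ hd) (hpos : 0 < f x / hbar) :
    deriv (fun y => kirchhoff lam beta hbar hd (f y)) x =
      (f x / hbar) ^ (-(lam * beta)) * deriv f x :=
  (hf.hasDerivAt.kirchhoff hlb hfx hpos).deriv

/-- `−λ/h̄·(h/h̄)^{λβ−λ−1}` is the capacity `dθ/dφ` of the Brooks–Corey water content
`θ = (h/h̄)^{−λ}`. -/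
theorem neg_div_mul_rpow_mul_deriv_kirchhoff_comp {f : ℝ → ℝ} {x : ℝ}
    (hf : DifferentiableAt ℝ f x) (hlb : lam * beta ≠ 1) (hfx : f x ≤ hd)
    (hpos : 0 < f x / hbar) :
    -lam / hbar * (f x / hbar) ^ (lam * beta - lam - 1) *
        deriv (fun y => kirchhoff lam beta hbar hd (f y)) x =
      deriv (fun y => (f y / hbar) ^ (-lam)) x := by
  rw [deriv_kirchhoff_comp hf hlb hfx hpos,
    ((hf.hasDerivAt.div_const hbar).rpow_const (p := -lam) (Or.inl hpos.ne')).deriv]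
  have hexp : (f x / hbar) ^ (lam * beta - lam - 1) * (f x / hbar) ^ (-(lam * beta)) =
      (f x / hbar) ^ (-lam - 1) := by
    rw [← rpow_add hpos]; ring_nf
  linear_combination (-lam / hbar * deriv f x) * hexp

theorem div_mul_rpow_neg_one_mul_kirchhoff (hlb : lam * beta ≠ 1) (hh : h ≤ hd)
    (hpos : 0 < h / hbar) :
    (1 - lam * beta) / hbar * (h / hbar) ^ (-1 : ℝ) * kirchhoff lam beta hbar hd h =
      (h / hbar) ^ (-(lam * beta)) := by
  have hexp : (h / hbar) ^ (-1 : ℝ) * (h / hbar) ^ (1 - lam * beta) =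
      (h / hbar) ^ (-(lam * beta)) := by
    rw [← rpow_add hpos]; ring_nf
  have hbar0 : hbar ≠ 0 := by rintro rfl; simp at hpos
  rw [kirchhoff_of_le hh, ← hexp]
  field_simp

end Kirchhoff

theorem richards_kirchhoff_equivalence_1d_general
    (lam beta hbar hd : ℝ)
    (hlb : 1 < lam * beta)
    (hhbar : hbar < 0) (hhd : hd < 0)
    (phip : ℝ) (K : ℝ → ℝ) (u : ℝ → ℝ → ℝ) (z0 t0 : ℝ)
    (hu_le : ∀ z, u z t0 ≤ hd)
    (hut : DifferentiableAt ℝ (fun t => u z0 t) t0)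
    (huz : Differentiable ℝ (fun z => u z t0)) :
    -- the time terms agree: E·∂_t v = ϕ_p·ω^{−λ}·∂_t[(u/h̄)^{−λ}]
    ((phip * (-lam / hbar) * (hbar / hd) ^ (-lam) *
          (u z0 t0 / hbar) ^ (lam * beta - lam - 1)) *
        deriv (fun t => kirchhoff lam beta hbar hd (u z0 t)) t0 =
      phip * (hbar / hd) ^ (-lam) *
        deriv (fun t => (u z0 t / hbar) ^ (-lam)) t0) ∧
    -- the flux terms agree: χ·∂_z v = K·ω^{−λβ}·(u/h̄)^{−λβ}·∂_z u
    (∀ z, (K z * (hbar / hd) ^ (-(lam * beta))) *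
        deriv (fun z' => kirchhoff lam beta hbar hd (u z' t0)) z =
      K z * (hbar / hd) ^ (-(lam * beta)) * (u z t0 / hbar) ^ (-(lam * beta)) *
        deriv (fun z' => u z' t0) z) ∧
    -- the gravity terms agree: χ·F·v = K·ω^{−λβ}·(u/h̄)^{−λβ}
    (∀ z, (K z * (hbar / hd) ^ (-(lam * beta))) *
        (((1 - lam * beta) / hbar) * (u z t0 / hbar) ^ (-1 : ℝ)) *
        kirchhoff lam beta hbar hd (u z t0) =
      K z * (hbar / hd) ^ (-(lam * beta)) * (u z t0 / hbar) ^ (-(lam * beta))) ∧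
    -- equivalence of the two equations at (z₀, t₀)
    (phip * (hbar / hd) ^ (-lam) * deriv (fun t => (u z0 t / hbar) ^ (-lam)) t0
        - deriv (fun z => K z * (hbar / hd) ^ (-(lam * beta)) *
            (u z t0 / hbar) ^ (-(lam * beta)) * deriv (fun z' => u z' t0) z) z0
        - deriv (fun z => K z * (hbar / hd) ^ (-(lam * beta)) *
            (u z t0 / hbar) ^ (-(lam * beta))) z0 = 0 ↔
      (phip * (-lam / hbar) * (hbar / hd) ^ (-lam) *
            (u z0 t0 / hbar) ^ (lam * beta - lam - 1)) *
          deriv (fun t => kirchhoff lam beta hbar hd (u z0 t)) t0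
        - deriv (fun z => (K z * (hbar / hd) ^ (-(lam * beta))) *
            deriv (fun z' => kirchhoff lam beta hbar hd (u z' t0)) z) z0
        - deriv (fun z => (K z * (hbar / hd) ^ (-(lam * beta))) *
            (((1 - lam * beta) / hbar) * (u z t0 / hbar) ^ (-1 : ℝ)) *
            kirchhoff lam beta hbar hd (u z t0)) z0 = 0) := by
  have hlb' : lam * beta ≠ 1 := hlb.ne'
  have hpos : ∀ z, 0 < u z t0 / hbar := fun z =>
    div_pos_of_neg_of_neg ((hu_le z).trans_lt hhd) hhbar
  have time : (phip * (-lam / hbar) * (hbar / hd) ^ (-lam) *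
          (u z0 t0 / hbar) ^ (lam * beta - lam - 1)) *
        deriv (fun t => kirchhoff lam beta hbar hd (u z0 t)) t0 =
      phip * (hbar / hd) ^ (-lam) * deriv (fun t => (u z0 t / hbar) ^ (-lam)) t0 := by
    rw [← neg_div_mul_rpow_mul_deriv_kirchhoff_comp hut hlb' (hu_le z0) (hpos z0)]
    ring
  have flux : ∀ z, (K z * (hbar / hd) ^ (-(lam * beta))) *
        deriv (fun z' => kirchhoff lam beta hbar hd (u z' t0)) z =
      K z * (hbar / hd) ^ (-(lam * beta)) * (u z t0 / hbar) ^ (-(lam * beta)) *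
        deriv (fun z' => u z' t0) z := fun z => by
    rw [deriv_kirchhoff_comp (huz z) hlb' (hu_le z) (hpos z)]
    ring
  have grav : ∀ z, (K z * (hbar / hd) ^ (-(lam * beta))) *
        (((1 - lam * beta) / hbar) * (u z t0 / hbar) ^ (-1 : ℝ)) *
        kirchhoff lam beta hbar hd (u z t0) =
      K z * (hbar / hd) ^ (-(lam * beta)) * (u z t0 / hbar) ^ (-(lam * beta)) := fun z => by
    rw [mul_assoc, div_mul_rpow_neg_one_mul_kirchhoff hlb' (hu_le z) (hpos z)]
  refine ⟨time, flux, grav, ?_⟩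
  rw [← time, funext flux, funext grav]

/-- Equivalence of the 1D Richards equation and its Kirchhoff-transformed form in
the unsaturated regime. With `ω = h̄/h_d`, `χ(z) = K(z)·ω^{−λβ}`,
`v = φ ∘ u`, `E = ϕ_p·(−λ/h̄)·ω^{−λ}·(u(z₀,t₀)/h̄)^{λβ−λ−1}` and
`F(z) = ((1−λβ)/h̄)·(u(z,t₀)/h̄)^{−1}`, the three corresponding terms of the two
equations coincide, and the original equation holds at `(z₀,t₀)` iff the
Kirchhoff-transformed one does. -/
theorem richards_kirchhoff_equivalence_1d
    (lam beta hbar hd : ℝ)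
    (hlam : 0 < lam) (hbeta : 1 < beta) (hlb : 1 < lam * beta)
    (hhbar : hbar < 0) (hhd : hd < 0)
    (phip : ℝ) (K : ℝ → ℝ) (u : ℝ → ℝ → ℝ) (z0 t0 : ℝ)
    (hu_le : ∀ z, u z t0 ≤ hd)
    (hut : DifferentiableAt ℝ (fun t => u z0 t) t0)
    (huz : Differentiable ℝ (fun z => u z t0))
    (hflux : DifferentiableAt ℝ
      (fun z => K z * (hbar / hd) ^ (-(lam * beta)) *
        (u z t0 / hbar) ^ (-(lam * beta)) * deriv (fun z' => u z' t0) z) z0)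
    (hgrav : DifferentiableAt ℝ
      (fun z => K z * (hbar / hd) ^ (-(lam * beta)) *
        (u z t0 / hbar) ^ (-(lam * beta))) z0) :
    -- the time terms agree: E·∂_t v = ϕ_p·ω^{−λ}·∂_t[(u/h̄)^{−λ}]
    ((phip * (-lam / hbar) * (hbar / hd) ^ (-lam) *
          (u z0 t0 / hbar) ^ (lam * beta - lam - 1)) *
        deriv (fun t => kirchhoff lam beta hbar hd (u z0 t)) t0 =
      phip * (hbar / hd) ^ (-lam) *
        deriv (fun t => (u z0 t / hbar) ^ (-lam)) t0) ∧
    -- the flux terms agree: χ·∂_z v = K·ω^{−λβ}·(u/h̄)^{−λβ}·∂_z u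
    (∀ z, (K z * (hbar / hd) ^ (-(lam * beta))) *
        deriv (fun z' => kirchhoff lam beta hbar hd (u z' t0)) z =
      K z * (hbar / hd) ^ (-(lam * beta)) * (u z t0 / hbar) ^ (-(lam * beta)) *
        deriv (fun z' => u z' t0) z) ∧
    -- the gravity terms agree: χ·F·v = K·ω^{−λβ}·(u/h̄)^{−λβ}
    (∀ z, (K z * (hbar / hd) ^ (-(lam * beta))) *
        (((1 - lam * beta) / hbar) * (u z t0 / hbar) ^ (-1 : ℝ)) *
        kirchhoff lam beta hbar hd (u z t0) =
      K z * (hbar / hd) ^ (-(lam * beta)) * (u z t0 / hbar) ^ (-(lam * beta))) ∧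
    -- equivalence of the two equations at (z₀, t₀)
    (phip * (hbar / hd) ^ (-lam) * deriv (fun t => (u z0 t / hbar) ^ (-lam)) t0
        - deriv (fun z => K z * (hbar / hd) ^ (-(lam * beta)) *
            (u z t0 / hbar) ^ (-(lam * beta)) * deriv (fun z' => u z' t0) z) z0
        - deriv (fun z => K z * (hbar / hd) ^ (-(lam * beta)) *
            (u z t0 / hbar) ^ (-(lam * beta))) z0 = 0 ↔
      (phip * (-lam / hbar) * (hbar / hd) ^ (-lam) *
            (u z0 t0 / hbar) ^ (lam * beta - lam - 1)) *
          deriv (fun t => kirchhoff lam beta hbar hd (u z0 t)) t0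
        - deriv (fun z => (K z * (hbar / hd) ^ (-(lam * beta))) *
            deriv (fun z' => kirchhoff lam beta hbar hd (u z' t0)) z) z0
        - deriv (fun z => (K z * (hbar / hd) ^ (-(lam * beta))) *
            (((1 - lam * beta) / hbar) * (u z t0 / hbar) ^ (-1 : ℝ)) *
            kirchhoff lam beta hbar hd (u z t0)) z0 = 0) :=
  richards_kirchhoff_equivalence_1d_general lam beta hbar hd hlb hhbar hhd phip K u z0 t0 hu_le hut
    huz
end
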